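/- Let f_1,…,f_n be convex differentiable with L-Lipschitz gradients, x* with ∇((1/n)∑f_i)(x*) = 0, and φ_1,…,φ_n ∈ H. For a uniformly random index j ∈ [n], define new points φ'_i = φ_i for i ≠ j and φ'_j = x. Then the average over j of (1/n)∑_i ‖∇f_i(φ'_i) − ∇f_i(x*)‖² equals (1 − 1/n)·(1/n)∑_i ‖∇f_i(φ_i) − ∇f_i(x*)‖² + (1/n²)∑_i ‖∇f_i(x) − ∇f_i(x*)‖², which is at most (1 − 1/n)·(1/n)∑_i‖∇f_i(φ_i) − ∇f_i(x*)‖² + (2L/n)(F(x) − F(x*)). -/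

import Mathlib

/-!
Replacing `φ j` by `x` changes only the `j`-th summand, so averaging over `j` keeps each old
term with weight `1 - 1/n` and each new term with weight `1/n`. The inequality is co-coercivity,
`‖∇f x - ∇f y‖² ≤ 2L (f x - f y - ⟪∇f y, x - y⟫)` for convex `f` with `L`-Lipschitz gradient,
summed over `i` at `y = x*`, where the linear terms cancel because `∑ ∇fᵢ x* = 0`.
Co-coercivity itself combines the first-order convexity inequality at `y` with the descent lemma
at `x`, both evaluated at the gradient step `x - (∇f x - ∇f y) / L`.
-/

open RealInnerProductSpace AffineMap

section Smooth

variable {H : Type*} [NormedAddCommGroup H] [InnerProductSpace ℝ H] [CompleteSpace H]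
  {f : H → ℝ} {f' : H} {g : H → H}

theorem HasGradientAt.hasDerivAt_comp_lineMap {a b : H} {t : ℝ}
    (h : HasGradientAt f f' (lineMap a b t)) :
    HasDerivAt (f ∘ lineMap a b) ⟪f', b - a⟫ t := by
  simpa [InnerProductSpace.toDual_apply_apply] using
    (hasGradientAt_iff_hasFDerivAt.mp h).comp_hasDerivAt t hasDerivAt_lineMap

theorem ConvexOn.add_inner_le_of_hasGradientAt (hf : ConvexOn ℝ Set.univ f) {y : H}
    (h : HasGradientAt f f' y) (u : H) :
    f y + ⟪f', u - y⟫ ≤ f u := by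
  have hd : HasDerivAt (f ∘ lineMap y u) ⟪f', u - y⟫ (0 : ℝ) :=
    HasGradientAt.hasDerivAt_comp_lineMap (by rwa [lineMap_apply_zero])
  have := (hf.comp_affineMap (lineMap y u)).le_slope_of_hasDerivAt
    (Set.mem_univ 0) (Set.mem_univ 1) zero_lt_one hd
  simp only [slope_def_field, Function.comp_apply, lineMap_apply_one, lineMap_apply_zero] at this
  linarith

theorem le_add_inner_add_sq_of_lipschitz_gradient {L : ℝ} (hgrad : ∀ x, HasGradientAt f (g x) x)
    (hlip : ∀ a b, ‖g a - g b‖ ≤ L * ‖a - b‖) (w z : H) :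
    f z ≤ f w + ⟪g w, z - w⟫ + L / 2 * ‖z - w‖ ^ 2 := by
  have hd : ∀ t : ℝ, HasDerivAt (f ∘ lineMap w z) ⟪g (lineMap w z t), z - w⟫ t := fun t =>
    (hgrad _).hasDerivAt_comp_lineMap
  have hB : ∀ t : ℝ, HasDerivAt (fun t => f w + t * ⟪g w, z - w⟫ + L / 2 * t ^ 2 * ‖z - w‖ ^ 2)
      (⟪g w, z - w⟫ + L * t * ‖z - w‖ ^ 2) t := fun t =>
    ((((hasDerivAt_id' t).mul_const ⟪g w, z - w⟫).const_add (f w)).add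
      (((hasDerivAt_pow 2 t).const_mul (L / 2)).mul_const (‖z - w‖ ^ 2))).congr_deriv
      (by norm_num only; ring)
  have bound : ∀ t ∈ Set.Ico (0 : ℝ) 1,
      ⟪g (lineMap w z t), z - w⟫ ≤ ⟪g w, z - w⟫ + L * t * ‖z - w‖ ^ 2 := by
    intro t ht
    have hdist : ‖lineMap w z t - w‖ = t * ‖z - w‖ := by
      rw [← dist_eq_norm, dist_lineMap_left, Real.norm_of_nonneg ht.1, dist_eq_norm']
    calc ⟪g (lineMap w z t), z - w⟫ = ⟪g w, z - w⟫ + ⟪g (lineMap w z t) - g w, z - w⟫ := by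
          rw [inner_sub_left]; ring
      _ ≤ ⟪g w, z - w⟫ + ‖g (lineMap w z t) - g w‖ * ‖z - w‖ := by
          gcongr; exact real_inner_le_norm _ _
      _ ≤ ⟪g w, z - w⟫ + L * ‖lineMap w z t - w‖ * ‖z - w‖ := by
          gcongr; exact hlip _ _
      _ = ⟪g w, z - w⟫ + L * t * ‖z - w‖ ^ 2 := by rw [hdist]; ring
  have := image_le_of_deriv_right_le_deriv_boundary
    (fun t _ => (hd t).continuousAt.continuousWithinAt) (fun t _ => (hd t).hasDerivWithinAt)
    (by simp) (fun t _ => (hB t).continuousAt.continuousWithinAt)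
    (fun t _ => (hB t).hasDerivWithinAt) bound (Set.right_mem_Icc.mpr zero_le_one)
  simpa using this

theorem ConvexOn.sq_norm_gradient_sub_le (hf : ConvexOn ℝ Set.univ f) {L : ℝ} (hL : 0 < L)
    (hgrad : ∀ x, HasGradientAt f (g x) x) (hlip : ∀ a b, ‖g a - g b‖ ≤ L * ‖a - b‖) (x y : H) :
    ‖g x - g y‖ ^ 2 ≤ 2 * L * (f x - f y - ⟪g y, x - y⟫) := by
  set d := g x - g y
  set u := x - L⁻¹ • d
  have hlower := hf.add_inner_le_of_hasGradientAt (hgrad y) u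
  have hupper := le_add_inner_add_sq_of_lipschitz_gradient hgrad hlip x u
  rw [show u - y = (x - y) - L⁻¹ • d by simp only [u]; abel, inner_sub_right,
    real_inner_smul_right] at hlower
  rw [show u - x = -(L⁻¹ • d) by simp only [u]; abel, inner_neg_right, real_inner_smul_right,
    norm_neg, norm_smul, Real.norm_of_nonneg (inv_nonneg.mpr hL.le)] at hupper
  have hd : L⁻¹ * ‖d‖ ^ 2 = L⁻¹ * ⟪g x, d⟫ - L⁻¹ * ⟪g y, d⟫ := by
    rw [← mul_sub, ← inner_sub_left, real_inner_self_eq_norm_sq]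
  have hsq : L / 2 * (L⁻¹ * ‖d‖) ^ 2 = L⁻¹ / 2 * ‖d‖ ^ 2 := by field_simp
  calc ‖d‖ ^ 2 = 2 * L * (L⁻¹ / 2 * ‖d‖ ^ 2) := by field_simp
    _ ≤ 2 * L * (f x - f y - ⟪g y, x - y⟫) := by gcongr; linarith

end Smooth

theorem Fintype.sum_sum_ite_eq_card_sub_one_mul_add {ι R : Type*} [Fintype ι] [DecidableEq ι]
    [CommRing R] (a b : ι → R) :
    ∑ j, ∑ i, (if i = j then b i else a i) = (Fintype.card ι - 1) * ∑ i, a i + ∑ i, b i := by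
  have hsplit : ∀ i j, (if i = j then b i else a i) = a i + if i = j then b i - a i else 0 := by
    intro i j; split_ifs <;> ring
  simp_rw [Finset.sum_comm (γ := ι) (f := fun j i => if i = j then b i else a i), hsplit,
    Finset.sum_add_distrib, Finset.sum_ite_eq, Finset.mem_univ, if_true, Finset.sum_const,
    Finset.card_univ, nsmul_eq_mul, Finset.sum_sub_distrib, ← Finset.mul_sum]
  ring

theorem sum_sq_norm_gradient_sub_le {ι H : Type*} [Fintype ι] [NormedAddCommGroup H]
    [InnerProductSpace ℝ H] [CompleteSpace H] {f : ι → H → ℝ} {g : ι → H → H} {L : ℝ}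
    (hL : 0 < L) (hf : ∀ i, ConvexOn ℝ Set.univ (f i))
    (hgrad : ∀ i x, HasGradientAt (f i) (g i x) x)
    (hlip : ∀ i a b, ‖g i a - g i b‖ ≤ L * ‖a - b‖) {xs : H} (hxs : ∑ i, g i xs = 0) (x : H) :
    ∑ i, ‖g i x - g i xs‖ ^ 2 ≤ 2 * L * (∑ i, f i x - ∑ i, f i xs) :=
  calc ∑ i, ‖g i x - g i xs‖ ^ 2 ≤ ∑ i, 2 * L * (f i x - f i xs - ⟪g i xs, x - xs⟫) :=
        Finset.sum_le_sum fun i _ => (hf i).sq_norm_gradient_sub_le hL (hgrad i) (hlip i) x xs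
    _ = 2 * L * (∑ i, f i x - ∑ i, f i xs - ⟪∑ i, g i xs, x - xs⟫) := by
        rw [← Finset.mul_sum, sum_inner, Finset.sum_sub_distrib, Finset.sum_sub_distrib]
    _ = 2 * L * (∑ i, f i x - ∑ i, f i xs) := by rw [hxs, inner_zero_left, sub_zero]

theorem stmt18_general {H : Type*} [NormedAddCommGroup H] [InnerProductSpace ℝ H] [CompleteSpace H]
    (n : ℕ) (f : Fin n → H → ℝ) (g : Fin n → H → H) (L : ℝ) (hL : 0 < L)
    (hconv : ∀ i, ConvexOn ℝ Set.univ (f i))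
    (hgrad : ∀ i x, HasGradientAt (f i) (g i x) x)
    (hlip : ∀ i x y, ‖g i x - g i y‖ ≤ L * ‖x - y‖)
    (xs : H) (hxs : (1 / (n : ℝ)) • ∑ i, g i xs = 0)
    (x : H) (φ : Fin n → H) :
    (1 / (n : ℝ)) * ∑ j, (1 / (n : ℝ)) *
        ∑ i, ‖g i (if i = j then x else φ i) - g i xs‖ ^ 2 =
      (1 - 1 / (n : ℝ)) * ((1 / (n : ℝ)) * ∑ i, ‖g i (φ i) - g i xs‖ ^ 2)
        + (1 / (n : ℝ) ^ 2) * ∑ i, ‖g i x - g i xs‖ ^ 2 ∧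
    (1 - 1 / (n : ℝ)) * ((1 / (n : ℝ)) * ∑ i, ‖g i (φ i) - g i xs‖ ^ 2)
        + (1 / (n : ℝ) ^ 2) * ∑ i, ‖g i x - g i xs‖ ^ 2 ≤
      (1 - 1 / (n : ℝ)) * ((1 / (n : ℝ)) * ∑ i, ‖g i (φ i) - g i xs‖ ^ 2)
        + (2 * L / (n : ℝ)) *
            ((1 / (n : ℝ)) * ∑ i, f i x - (1 / (n : ℝ)) * ∑ i, f i xs) := by
  rcases Nat.eq_zero_or_pos n with rfl | hn
  · simp
  have hn0 : (n : ℝ) ≠ 0 := by positivity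
  constructor
  · have hterm : ∀ i j, ‖g i (if i = j then x else φ i) - g i xs‖ ^ 2 =
        if i = j then ‖g i x - g i xs‖ ^ 2 else ‖g i (φ i) - g i xs‖ ^ 2 := by
      intro i j; split_ifs <;> rfl
    simp_rw [hterm, ← Finset.mul_sum,
      Fintype.sum_sum_ite_eq_card_sub_one_mul_add, Fintype.card_fin]
    field_simp
  · have hsum : ∑ i, g i xs = 0 := (smul_eq_zero.mp hxs).resolve_left (by positivity)
    have := sum_sq_norm_gradient_sub_le hL hconv hgrad hlip hsum x
    calc _ ≤ _ + 1 / (n : ℝ) ^ 2 * (2 * L * (∑ i, f i x - ∑ i, f i xs)) := by gcongr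
      _ = _ := by ring

theorem stmt18 {H : Type*} [NormedAddCommGroup H] [InnerProductSpace ℝ H] [CompleteSpace H]
    (n : ℕ) (hn : 1 ≤ n) (f : Fin n → H → ℝ) (g : Fin n → H → H) (L : ℝ) (hL : 0 < L)
    (hconv : ∀ i, ConvexOn ℝ Set.univ (f i))
    (hgrad : ∀ i x, HasGradientAt (f i) (g i x) x)
    (hlip : ∀ i x y, ‖g i x - g i y‖ ≤ L * ‖x - y‖)
    (xs : H) (hxs : (1 / (n : ℝ)) • ∑ i, g i xs = 0)
    (x : H) (φ : Fin n → H) :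
    (1 / (n : ℝ)) * ∑ j, (1 / (n : ℝ)) *
        ∑ i, ‖g i (if i = j then x else φ i) - g i xs‖ ^ 2 =
      (1 - 1 / (n : ℝ)) * ((1 / (n : ℝ)) * ∑ i, ‖g i (φ i) - g i xs‖ ^ 2)
        + (1 / (n : ℝ) ^ 2) * ∑ i, ‖g i x - g i xs‖ ^ 2 ∧
    (1 - 1 / (n : ℝ)) * ((1 / (n : ℝ)) * ∑ i, ‖g i (φ i) - g i xs‖ ^ 2)
        + (1 / (n : ℝ) ^ 2) * ∑ i, ‖g i x - g i xs‖ ^ 2 ≤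
      (1 - 1 / (n : ℝ)) * ((1 / (n : ℝ)) * ∑ i, ‖g i (φ i) - g i xs‖ ^ 2)
        + (2 * L / (n : ℝ)) *
            ((1 / (n : ℝ)) * ∑ i, f i x - (1 / (n : ℝ)) * ∑ i, f i xs) :=
  stmt18_general n f g L hL hconv hgrad hlip xs hxs x φ
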